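/- arXiv:2007.08869 — 2 statements merged into one kernel-verified Lean document; each statement's English description precedes it below -/
import Mathlib

section
/- Let p = p(n) ∈ [0,1] be a sequence of edge probabilities such that (n(1−p))⁴p² → 0 as n → ∞. Then the probability that the Erdős–Rényi random graph G(n,1−p) is 4-chordal tends to 1 as n → ∞. (Equivalently, with high probability the complement of G(n,p) has no induced 4-cycle, i.e. the edge ideal I(n,p) has linear presentation.) -/
/-!
A chordless 4-cycle of `G` on the vertex map `v : ZMod 4 ↪ Fin n` is exactly the event that `G`
pulls back along `v` to the circulant 4-cycle: four prescribed edges present and two absent.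
In `G(n, q)` this has probability `q ⁴ (1 - q) ²`, since the probability that the edges of `P` are
present and those of a disjoint `N` absent factors as `q ^ |P| (1 - q) ^ |N|`. A union bound over
the `n.descFactorial 4 ≤ n ⁴` injections gives `P(G(n, 1 - p) is not 4-chordal) ≤ (n (1 - p)) ⁴ p ²`.
-/

open Filter

/-- Probability weight of a given graph `G` under the Erdős–Rényi model `G(n,p)`:
each of the `n.choose 2` possible edges is present independently with probability `p`. -/
noncomputable def graphWeight (n : ℕ) (p : ℝ) (G : SimpleGraph (Fin n)) : ℝ :=
  p ^ Nat.card G.edgeSet * (1 - p) ^ (n.choose 2 - Nat.card G.edgeSet)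

/-- Probability of the event `A` under the Erdős–Rényi random graph `G(n,p)`. -/
noncomputable def erProb (n : ℕ) (p : ℝ) (A : Set (SimpleGraph (Fin n))) : ℝ :=
  ∑ G : SimpleGraph (Fin n), A.indicator (graphWeight n p) G

/-- `v : ZMod k → V` describes a chordless (induced) `k`-cycle of `G`:
it is injective, consecutive vertices are adjacent, and non-consecutive
vertices are non-adjacent. -/
def IsChordlessCycleOn {V : Type} (G : SimpleGraph V) {k : ℕ} (v : ZMod k → V) : Prop :=
  Function.Injective v ∧
    (∀ i : ZMod k, G.Adj (v i) (v (i + 1))) ∧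
    ∀ i j : ZMod k, i ≠ j → j ≠ i + 1 → i ≠ j + 1 → ¬G.Adj (v i) (v j)

/-- A graph is 4-chordal if every cycle of length 4 has a chord, i.e. there is
no chordless 4-cycle. -/
def FourChordal {V : Type} (G : SimpleGraph V) : Prop :=
  ¬∃ v : ZMod 4 → V, IsChordlessCycleOn G v

/-- A graph is chordal if every cycle of length at least 4 has a chord, i.e. there is
no chordless cycle of length at least 4. -/
def Chordal {V : Type} (G : SimpleGraph V) : Prop :=
  ∀ k : ℕ, 4 ≤ k → ¬∃ v : ZMod k → V, IsChordlessCycleOn G v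

open Finset SimpleGraph

namespace SimpleGraph

variable {V : Type*}

theorem edgeFinset_compl [Fintype V] [DecidableEq V] (G : SimpleGraph V)
    [Fintype G.edgeSet] [Fintype Gᶜ.edgeSet] :
    Gᶜ.edgeFinset = (⊤ : SimpleGraph V).edgeFinset \ G.edgeFinset := by
  ext e
  induction e
  simp

theorem forall_mem_edgeFinset_notMem_iff (G H : SimpleGraph V) [Fintype G.edgeSet]
    [Fintype H.edgeSet] : (∀ e ∈ G.edgeFinset, e ∉ H.edgeFinset) ↔ Disjoint G H := by
  rw [← Finset.disjoint_left, disjoint_edgeFinset]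

open scoped Classical in
theorem sum_powerset_edgeFinset_top [Fintype V] [DecidableEq V] {M : Type*} [AddCommMonoid M]
    (F : Finset (Sym2 V) → M) :
    ∑ t ∈ (⊤ : SimpleGraph V).edgeFinset.powerset, F t = ∑ G : SimpleGraph V, F G.edgeFinset := by
  -- Naming the map fixes a single `Fintype` instance behind `edgeFinset` for both directions.
  set edges : SimpleGraph V → Finset (Sym2 V) := fun G => G.edgeFinset
  have edges_fromEdgeSet : ∀ t ∈ (⊤ : SimpleGraph V).edgeFinset.powerset,
      edges (fromEdgeSet t) = t := by
    intro t ht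
    ext e
    simp only [mem_powerset, edgeFinset_top] at ht
    simpa [edges, edgeFinset] using fun he => by simpa using ht he
  exact sum_nbij' (fun t => fromEdgeSet t) edges (by simp)
    (fun G _ => by simpa using edgeFinset_mono (le_top : G ≤ ⊤)) edges_fromEdgeSet
    (by simp [edges]) fun t ht => congrArg F (edges_fromEdgeSet t ht).symm

end SimpleGraph

section ErdosRenyi

variable {n : ℕ} {q : ℝ}

theorem graphWeight_nonneg (hq₀ : 0 ≤ q) (hq₁ : q ≤ 1) (G : SimpleGraph (Fin n)) :
    0 ≤ graphWeight n q G :=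
  mul_nonneg (pow_nonneg hq₀ _) (pow_nonneg (sub_nonneg.2 hq₁) _)

theorem erProb_nonneg (hq₀ : 0 ≤ q) (hq₁ : q ≤ 1) (A : Set (SimpleGraph (Fin n))) :
    0 ≤ erProb n q A :=
  sum_nonneg fun G _ => Set.indicator_nonneg (fun G _ => graphWeight_nonneg hq₀ hq₁ G) G

theorem erProb_mono (hq₀ : 0 ≤ q) (hq₁ : q ≤ 1) {A B : Set (SimpleGraph (Fin n))} (h : A ⊆ B) :
    erProb n q A ≤ erProb n q B :=
  sum_le_sum fun G _ => Set.indicator_le_indicator_of_subset h (graphWeight_nonneg hq₀ hq₁) G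

theorem erProb_iUnion_le (hq₀ : 0 ≤ q) (hq₁ : q ≤ 1) {ι : Type*} [Fintype ι]
    (A : ι → Set (SimpleGraph (Fin n))) :
    erProb n q (⋃ i, A i) ≤ ∑ i, erProb n q (A i) := by
  have indicator_nonneg (s : Set (SimpleGraph (Fin n))) (G : SimpleGraph (Fin n)) :
      0 ≤ s.indicator (graphWeight n q) G :=
    Set.indicator_nonneg (fun G _ => graphWeight_nonneg hq₀ hq₁ G) G
  calc erProb n q (⋃ i, A i)
      ≤ ∑ G, ∑ i, (A i).indicator (graphWeight n q) G := sum_le_sum fun G _ => ?_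
    _ = ∑ i, erProb n q (A i) := sum_comm
  by_cases hG : G ∈ ⋃ i, A i
  · obtain ⟨i, hi⟩ := Set.mem_iUnion.mp hG
    rw [Set.indicator_of_mem hG, ← Set.indicator_of_mem hi (graphWeight n q)]
    exact single_le_sum (fun i _ => indicator_nonneg (A i) G) (mem_univ i)
  · rw [Set.indicator_of_notMem hG]
    exact sum_nonneg fun i _ => indicator_nonneg (A i) G

open scoped Classical in
theorem graphWeight_eq_pow_mul_pow (G : SimpleGraph (Fin n)) :
    graphWeight n q G = q ^ #G.edgeFinset * (1 - q) ^ #Gᶜ.edgeFinset := by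
  rw [graphWeight, Nat.card_eq_fintype_card, card_edgeSet, edgeFinset_compl,
    card_sdiff_of_subset (edgeFinset_mono le_top), card_edgeFinset_top_eq_card_choose_two,
    Fintype.card_fin]

theorem erProb_setOf_le_and_disjoint (P N : SimpleGraph (Fin n)) [Fintype P.edgeSet]
    [Fintype N.edgeSet] (hPN : Disjoint P N) :
    erProb n q {G | P ≤ G ∧ Disjoint G N} = q ^ #P.edgeFinset * (1 - q) ^ #N.edgeFinset := by
  classical
  -- Expanding `∏ e, (f e + g e)` over all potential edges sums, over every graph `G`, the
  -- weight of `G` times the indicator that `G` contains `P` and avoids `N`.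
  set f : Sym2 (Fin n) → ℝ := fun e => if e ∉ N.edgeFinset then q else 0
  set g : Sym2 (Fin n) → ℝ := fun e => if e ∉ P.edgeFinset then 1 - q else 0
  have indicator_eq (G : SimpleGraph (Fin n)) :
      {G | P ≤ G ∧ Disjoint G N}.indicator (graphWeight n q) G
        = (∏ e ∈ G.edgeFinset, f e) * ∏ e ∈ Gᶜ.edgeFinset, g e := by
    simp only [f, g, prod_ite_zero, forall_mem_edgeFinset_notMem_iff, prod_const,
      ite_zero_mul_ite_zero, disjoint_compl_left_iff, graphWeight_eq_pow_mul_pow,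
      Set.indicator_apply, Set.mem_ofPred_eq, and_comm]
  have f_add_g (e : Sym2 (Fin n)) : f e + g e
      = (if e ∈ P.edgeFinset then q else 1) * (if e ∈ N.edgeFinset then 1 - q else 1) := by
    have : e ∈ P.edgeFinset → e ∉ N.edgeFinset :=
      fun h => Finset.disjoint_left.mp (disjoint_edgeFinset.mpr hPN) h
    simp only [f, g]
    split_ifs <;> simp_all
  calc erProb n q {G | P ≤ G ∧ Disjoint G N}
      = ∑ G : SimpleGraph (Fin n), (∏ e ∈ G.edgeFinset, f e) * ∏ e ∈ Gᶜ.edgeFinset, g e :=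
        sum_congr rfl fun G _ => indicator_eq G
    _ = ∏ e ∈ (⊤ : SimpleGraph (Fin n)).edgeFinset, (f e + g e) := by
        simp only [prod_add, sum_powerset_edgeFinset_top, edgeFinset_compl]
    _ = q ^ #P.edgeFinset * (1 - q) ^ #N.edgeFinset := by
        rw [prod_congr rfl fun e _ => f_add_g e, prod_mul_distrib, prod_ite_mem, prod_ite_mem,
          inter_eq_right.mpr (edgeFinset_mono le_top), inter_eq_right.mpr (edgeFinset_mono le_top),
          prod_const, prod_const]

theorem erProb_univ : erProb n q Set.univ = 1 := by
  simpa using erProb_setOf_le_and_disjoint (n := n) (q := q) ⊥ ⊥ disjoint_bot_left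

theorem erProb_compl (A : Set (SimpleGraph (Fin n))) : erProb n q Aᶜ = 1 - erProb n q A := by
  rw [eq_sub_iff_add_eq', ← erProb_univ (n := n) (q := q), erProb, erProb, erProb,
    ← sum_add_distrib]
  simp

theorem erProb_comap_eq {W : Type*} [Fintype W] [DecidableEq W] (H : SimpleGraph W)
    [DecidableRel H.Adj] (v : W ↪ Fin n) :
    erProb n q {G | G.comap v = H} = q ^ #H.edgeFinset * (1 - q) ^ #Hᶜ.edgeFinset := by
  classical
  have event_eq : {G : SimpleGraph (Fin n) | G.comap v = H}
      = {G | H.map v ≤ G ∧ Disjoint G (Hᶜ.map v)} := by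
    ext G
    simp only [Set.mem_ofPred_eq, SimpleGraph.map_le_iff_le_comap, SimpleGraph.disjoint_left,
      map_adj, compl_adj]
    constructor
    · rintro rfl
      exact ⟨le_rfl, fun _ _ hG ⟨a, b, ⟨_, hH⟩, ha, hb⟩ => hH (by subst ha hb; exact hG)⟩
    · rintro ⟨hle, hdisj⟩
      refine le_antisymm (fun a b hab => ?_) hle
      by_contra hH
      exact hdisj _ _ hab ⟨a, b, ⟨(G.comap v).ne_of_adj hab, hH⟩, rfl, rfl⟩
  have map_disjoint : Disjoint (H.map v) (Hᶜ.map v) := by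
    simp only [SimpleGraph.disjoint_left, map_adj, compl_adj]
    rintro _ _ ⟨a, b, hab, rfl, rfl⟩ ⟨a', b', ⟨_, hn⟩, ha, hb⟩
    rw [v.injective ha, v.injective hb] at hn
    exact hn hab
  rw [event_eq, erProb_setOf_le_and_disjoint _ _ map_disjoint, card_edgeFinset_map,
    card_edgeFinset_map]

end ErdosRenyi

theorem IsChordlessCycleOn.comap_eq_circulantGraph {V : Type} {G : SimpleGraph V}
    {v : ZMod 4 → V} (hv : IsChordlessCycleOn G v) :
    G.comap v = circulantGraph {1} := by
  obtain ⟨-, hcycle, hchord⟩ := hv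
  ext a b
  simp only [comap_adj, circulantGraph_adj, Set.mem_singleton_iff, sub_eq_iff_eq_add']
  constructor
  · intro hab
    have hne : a ≠ b := fun h => G.ne_of_adj hab (congrArg v h)
    refine ⟨hne, ?_⟩
    by_contra! hnot
    exact hchord a b hne hnot.2 hnot.1 hab
  · rintro ⟨-, rfl | rfl⟩
    · exact (hcycle b).symm
    · exact hcycle a

theorem erProb_not_fourChordal_le {n : ℕ} {q : ℝ} (hq₀ : 0 ≤ q) (hq₁ : q ≤ 1) :
    erProb n q {G | ¬FourChordal G} ≤ ((n : ℝ) * q) ^ 4 * (1 - q) ^ 2 := by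
  set C : SimpleGraph (ZMod 4) := circulantGraph {1}
  have not_fourChordal_subset : {G : SimpleGraph (Fin n) | ¬FourChordal G}
      ⊆ ⋃ v : ZMod 4 ↪ Fin n, {G | G.comap v = C} := by
    intro G hG
    obtain ⟨v, hv⟩ := not_not.mp hG
    exact Set.mem_iUnion.mpr ⟨⟨v, hv.1⟩, hv.comap_eq_circulantGraph⟩
  have card_edges : #C.edgeFinset = 4 := by decide
  have card_nonedges : #Cᶜ.edgeFinset = 2 := by decide
  have card_embedding_le : ((n.descFactorial 4 : ℕ) : ℝ) ≤ (n : ℝ) ^ 4 := by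
    exact_mod_cast n.descFactorial_le_pow 4
  calc erProb n q {G | ¬FourChordal G}
      ≤ ∑ v : ZMod 4 ↪ Fin n, erProb n q {G | G.comap v = C} :=
        (erProb_mono hq₀ hq₁ not_fourChordal_subset).trans (erProb_iUnion_le hq₀ hq₁ _)
    _ = n.descFactorial 4 * (q ^ 4 * (1 - q) ^ 2) := by
        simp only [erProb_comap_eq, sum_const, card_univ, Fintype.card_embedding_eq,
          Fintype.card_fin, ZMod.card, nsmul_eq_mul, card_edges, card_nonedges]
    _ ≤ ((n : ℝ) * q) ^ 4 * (1 - q) ^ 2 := by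
        rw [mul_pow, mul_assoc]
        gcongr

/-- If `(n(1-p))⁴ p² → 0`, then with high probability `G(n,1-p)` is 4-chordal
(equivalently, the edge ideal `I(n,p)` has linear presentation). -/
theorem fourChordal_whp (p : ℕ → ℝ) (hp : ∀ n, p n ∈ Set.Icc (0 : ℝ) 1)
    (h : Tendsto (fun n : ℕ => ((n : ℝ) * (1 - p n)) ^ 4 * p n ^ 2) atTop (nhds 0)) :
    Tendsto (fun n : ℕ => erProb n (1 - p n) {G | FourChordal G}) atTop (nhds 1) := by
  have hq₀ (n : ℕ) : 0 ≤ 1 - p n := sub_nonneg.mpr (hp n).2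
  have hq₁ (n : ℕ) : 1 - p n ≤ 1 := sub_le_self 1 (hp n).1
  have not_fourChordal_to_zero :
      Tendsto (fun n => erProb n (1 - p n) {G | ¬FourChordal G}) atTop (nhds 0) := by
    refine squeeze_zero (fun n => erProb_nonneg (hq₀ n) (hq₁ n) _) (fun n => ?_) h
    simpa using erProb_not_fourChordal_le (n := n) (hq₀ n) (hq₁ n)
  simpa [← erProb_compl, Set.compl_ofPred] using
    (tendsto_const_nhds (x := (1 : ℝ))).sub not_fourChordal_to_zero
end

section
/- Let p = n^{−α} with α ∈ [1, 3/2). Then with probability tending to 1 as n → ∞, the Erdős–Rényi random graph G(n,p) has two minimal vertex covers of different cardinalities. (Equivalently, the random edge ideal I(n,p) is not unmixed with high probability.) -/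
open Filter

/-- A set of vertices `C` is a vertex cover of `G` if every edge of `G` has an
endpoint in `C`. -/
def IsVertexCover {V : Type} (G : SimpleGraph V) (C : Set V) : Prop :=
  ∀ ⦃u w : V⦄, G.Adj u w → u ∈ C ∨ w ∈ C

/-- A vertex cover is minimal if no proper subset of it is a vertex cover. -/
def IsMinimalVertexCover {V : Type} (G : SimpleGraph V) (C : Set V) : Prop :=
  IsVertexCover G C ∧ ∀ D : Set V, D ⊂ C → ¬IsVertexCover G D

/-- All minimal vertex covers of `G` have the same cardinality (equivalently, the
edge ideal of `G` is unmixed). -/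
def Unmixed {V : Type} (G : SimpleGraph V) : Prop :=
  ∀ C D : Set V, IsMinimalVertexCover G C → IsMinimalVertexCover G D → C.ncard = D.ncard

open Finset

/-!
A cherry component of a graph, a path `b - a - c` whose vertices have no further neighbours, has
the two minimal vertex covers `{a}` and `{b, c}`; completing both by the same minimal cover of the
rest of the graph gives two minimal vertex covers of different sizes. So it suffices that `G(n,p)`
has a cherry component with high probability. The expected number `μ` of cherry components is at
least of order `n³ p² (1 - p)^{3n} ≍ n^{3 - 2α} → ∞`. Cherries on disjoint triples share at most
nine potential edges, all absent, so they are independent up to a factor `(1 - p)^9`; cherries on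
overlapping triples coincide up to swapping the leaves or are incompatible. The second moment
method then gives `P(some cherry component) ≥ (1 - p)^9 μ / (μ + 2) → 1`.
-/

section VertexCover

variable {V : Type} {G H : SimpleGraph V} {S C T : Set V}

lemma not_unmixed_iff : ¬Unmixed G ↔
    ∃ C D : Set V, IsMinimalVertexCover G C ∧ IsMinimalVertexCover G D ∧ C.ncard ≠ D.ncard := by
  simp [Unmixed]

lemma exists_isMinimalVertexCover [Finite V] (G : SimpleGraph V) :
    ∃ C, IsMinimalVertexCover G C := by
  obtain ⟨C, -, hC⟩ := exists_minimal_le_of_wellFoundedLT (IsVertexCover G) Set.univ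
    fun _ _ _ => .inl trivial
  exact ⟨C, Set.minimal_iff_forall_ssubset.1 hC⟩

lemma IsMinimalVertexCover.exists_adj (hC : IsMinimalVertexCover G C) {x : V} (hx : x ∈ C) :
    ∃ w, G.Adj x w := by
  by_contra! h
  refine hC.2 (C \ {x}) (Set.sdiff_singleton_ssubset.2 hx) fun u w huw => ?_
  rcases hC.1 huw with hu | hw
  · exact .inl ⟨hu, fun hux => h w (hux ▸ huw)⟩
  · exact .inr ⟨hw, fun hwx => h u (hwx ▸ huw.symm)⟩

lemma IsMinimalVertexCover.subset (hS : IsMinimalVertexCover H S)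
    (hHT : ∀ ⦃u w⦄, H.Adj u w → u ∈ T) : S ⊆ T := fun _ hx =>
  let ⟨_, hxw⟩ := hS.exists_adj hx
  hHT hxw

/- The hypotheses `hHT` and `hGH` below say that `H` is the union of the connected components of
`G` that meet `T`. -/

lemma IsVertexCover.union_sdiff (hGH : ∀ u ∈ T, ∀ w, G.Adj u w ↔ H.Adj u w) {X Y : Set V}
    (hX : IsVertexCover H X) (hY : IsVertexCover G Y) : IsVertexCover G (X ∪ (Y \ T)) := by
  intro u w huw
  by_cases hu : u ∈ T
  · exact (hX ((hGH u hu w).1 huw)).imp .inl .inl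
  by_cases hw : w ∈ T
  · exact (hX ((hGH w hw u).1 huw.symm)).symm.imp .inl .inl
  exact (hY huw).imp (fun h => .inr ⟨h, hu⟩) (fun h => .inr ⟨h, hw⟩)

lemma IsVertexCover.inter (hHT : ∀ ⦃u w⦄, H.Adj u w → u ∈ T)
    (hGH : ∀ u ∈ T, ∀ w, G.Adj u w ↔ H.Adj u w) {X : Set V} (hX : IsVertexCover G X) :
    IsVertexCover H (X ∩ T) :=
  fun u w huw => (hX ((hGH u (hHT huw) w).2 huw)).imp (⟨·, hHT huw⟩) (⟨·, hHT huw.symm⟩)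

lemma IsMinimalVertexCover.union_sdiff (hHT : ∀ ⦃u w⦄, H.Adj u w → u ∈ T)
    (hGH : ∀ u ∈ T, ∀ w, G.Adj u w ↔ H.Adj u w) (hS : IsMinimalVertexCover H S)
    (hC : IsMinimalVertexCover G C) : IsMinimalVertexCover G (S ∪ (C \ T)) := by
  have hST := hS.subset hHT
  refine ⟨hS.1.union_sdiff hGH hC.1, fun D hD hDcov => ?_⟩
  have hSD : S ⊆ D := by
    have hDS : D ∩ T ⊆ S := fun x ⟨hxD, hxT⟩ => (hD.1 hxD).resolve_right fun h => h.2 hxT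
    by_contra hSD
    exact hS.2 _ (ssubset_of_subset_not_subset hDS fun h => hSD fun x hx => (h hx).1)
      (hDcov.inter hHT hGH)
  -- so `D` misses a vertex of `C \ T`, and `(C ∩ T) ∪ (D \ T)` is a cover strictly inside `C`
  obtain ⟨x, hxSC, hxD⟩ := Set.exists_of_ssubset hD
  have hxC : x ∈ C \ T := hxSC.resolve_left fun hxS => hxD (hSD hxS)
  refine hC.2 ((C ∩ T) ∪ (D \ T)) ⟨?_, fun h => ?_⟩
    ((hC.1.inter hHT hGH).union_sdiff hGH hDcov)
  · rintro y (hy | ⟨hyD, hyT⟩)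
    · exact hy.1
    · exact ((hD.1 hyD).resolve_left fun hyS => hyT (hST hyS)).1
  · rcases h hxC.1 with hx | hx
    · exact hxC.2 hx.2
    · exact hxD hx.1

lemma Unmixed.of_components [Finite V] (hG : Unmixed G) (hHT : ∀ ⦃u w⦄, H.Adj u w → u ∈ T)
    (hGH : ∀ u ∈ T, ∀ w, G.Adj u w ↔ H.Adj u w) : Unmixed H := by
  intro S S' hS hS'
  obtain ⟨C, hC⟩ := exists_isMinimalVertexCover G
  have hcard : ∀ {S}, IsMinimalVertexCover H S → (S ∪ (C \ T)).ncard = S.ncard + (C \ T).ncard :=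
    fun hS => Set.ncard_union_eq (Set.disjoint_left.2 fun _ hx hx' => hx'.2 (hS.subset hHT hx))
  have := hG _ _ (hS.union_sdiff hHT hGH hC) (hS'.union_sdiff hHT hGH hC)
  rw [hcard hS, hcard hS'] at this
  omega

def cherryGraph (a b c : V) : SimpleGraph V := SimpleGraph.fromEdgeSet {s(a, b), s(a, c)}

section Cherry

variable {a b c : V}

lemma cherryGraph_adj {u w : V} (hab : a ≠ b) (hac : a ≠ c) :
    (cherryGraph a b c).Adj u w ↔ u = a ∧ (w = b ∨ w = c) ∨ w = a ∧ (u = b ∨ u = c) := by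
  simp only [cherryGraph, SimpleGraph.fromEdgeSet_adj, Set.mem_insert_iff, Set.mem_singleton_iff,
    Sym2.eq_iff]
  aesop

lemma mem_of_cherryGraph_adj {u w : V} (hab : a ≠ b) (hac : a ≠ c)
    (h : (cherryGraph a b c).Adj u w) : u ∈ ({a, b, c} : Set V) := by
  rw [cherryGraph_adj hab hac] at h
  aesop

lemma not_unmixed_cherryGraph (hab : a ≠ b) (hac : a ≠ c) (hbc : b ≠ c) :
    ¬Unmixed (cherryGraph a b c) := by
  have hcenter : IsMinimalVertexCover (cherryGraph a b c) {a} := by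
    refine ⟨fun u w huw => ?_, fun D hD hDcov => ?_⟩
    · rw [cherryGraph_adj hab hac] at huw
      aesop
    · rw [Set.ssubset_singleton_iff.1 hD] at hDcov
      simpa using hDcov ((cherryGraph_adj hab hac).2 (.inl ⟨rfl, .inl rfl⟩))
  have hleaves : IsMinimalVertexCover (cherryGraph a b c) {b, c} := by
    refine ⟨fun u w huw => ?_, fun D hD hDcov => ?_⟩
    · rw [cherryGraph_adj hab hac] at huw
      aesop
    · have haD : a ∉ D := fun h => by simpa [hab, hac] using hD.1 h
      obtain ⟨x, hx, hxD⟩ := Set.exists_of_ssubset hD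
      rcases hx with rfl | rfl
      · exact ((hDcov ((cherryGraph_adj hab hac).2 (.inl ⟨rfl, .inl rfl⟩))).elim haD hxD)
      · exact ((hDcov ((cherryGraph_adj hab hac).2 (.inl ⟨rfl, .inr rfl⟩))).elim haD hxD)
  intro h
  have := h _ _ hcenter hleaves
  rw [Set.ncard_singleton, Set.ncard_pair hbc] at this
  omega

def IsCherryComponent (G : SimpleGraph V) (a b c : V) : Prop :=
  ∀ u ∈ ({a, b, c} : Set V), ∀ w, G.Adj u w ↔ (cherryGraph a b c).Adj u w

namespace IsCherryComponent

lemma adj_center (h : IsCherryComponent G a b c) (hab : a ≠ b) (hac : a ≠ c) {w : V} :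
    G.Adj a w ↔ w = b ∨ w = c := by
  rw [h a (by simp), cherryGraph_adj hab hac]
  aesop

lemma adj_left (h : IsCherryComponent G a b c) (hab : a ≠ b) (hac : a ≠ c) {w : V} :
    G.Adj b w ↔ w = a := by
  rw [h b (by simp), cherryGraph_adj hab hac]
  aesop

lemma adj_right (h : IsCherryComponent G a b c) (hab : a ≠ b) (hac : a ≠ c) {w : V} :
    G.Adj c w ↔ w = a := by
  rw [h c (by simp), cherryGraph_adj hab hac]
  aesop

lemma not_unmixed [Finite V] (h : IsCherryComponent G a b c) (hab : a ≠ b) (hac : a ≠ c)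
    (hbc : b ≠ c) : ¬Unmixed G := fun hG =>
  not_unmixed_cherryGraph hab hac hbc <| hG.of_components
    (fun _ _ => mem_of_cherryGraph_adj hab hac) h

lemma eq_of_mem {a' b' c' x : V} (h : IsCherryComponent G a b c) (hab : a ≠ b) (hac : a ≠ c)
    (h' : IsCherryComponent G a' b' c') (hab' : a' ≠ b') (hac' : a' ≠ c') (hbc' : b' ≠ c')
    (hx : x ∈ ({a, b, c} : Set V)) (hx' : x ∈ ({a', b', c'} : Set V)) :
    a' = a ∧ (b' = b ∧ c' = c ∨ b' = c ∧ c' = b) := by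
  have hclosed : ∀ u ∈ ({a, b, c} : Set V), ∀ w, G.Adj u w → w ∈ ({a, b, c} : Set V) := by
    rintro u (rfl | rfl | rfl) w huw
    · rcases (h.adj_center hab hac).1 huw with rfl | rfl <;> simp
    · simp [(h.adj_left hab hac).1 huw]
    · simp [(h.adj_right hab hac).1 huw]
  have ha' : a' ∈ ({a, b, c} : Set V) := by
    rcases hx' with rfl | rfl | rfl
    · exact hx
    · exact hclosed _ hx _ ((h'.adj_left hab' hac').2 rfl)
    · exact hclosed _ hx _ ((h'.adj_right hab' hac').2 rfl)
  have hb' := (h'.adj_center hab' hac').2 (.inl rfl)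
  have hc' := (h'.adj_center hab' hac').2 (.inr rfl)
  rcases ha' with rfl | rfl | rfl
  · rw [h.adj_center hab hac] at hb' hc'
    rcases hb' with rfl | rfl <;> rcases hc' with rfl | rfl <;> simp_all
  · rw [h.adj_left hab hac] at hb' hc'
    exact absurd (hb'.trans hc'.symm) hbc'
  · rw [h.adj_right hab hac] at hb' hc'
    exact absurd (hb'.trans hc'.symm) hbc'

end IsCherryComponent

end Cherry

end VertexCover

namespace RandomGraph

section BernoulliProduct

variable {ι : Type*} {p : ℝ}

def cylinder (S : Finset ι) (v : ι → Bool) : Set (ι → Bool) :=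
  {f | ∀ i ∈ S, f i = v i}

lemma cylinder_inter_cylinder [DecidableEq ι] {S S' : Finset ι} {v v' : ι → Bool}
    (hv : ∀ i ∈ S', v i = false) (hv' : ∀ i ∈ S, v' i = false) :
    cylinder S v ∩ cylinder S' v' = cylinder (S ∪ S') fun i => v i || v' i := by
  ext f
  simp only [cylinder, Set.mem_inter_iff, Set.mem_ofPred_eq, mem_union]
  constructor
  · rintro ⟨hf, hf'⟩ i (hi | hi)
    · simp [hf i hi, hv' i hi]
    · simp [hf' i hi, hv i hi]
  · intro hf
    exact ⟨fun i hi => by simpa [hv' i hi] using hf i (.inl hi),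
      fun i hi => by simpa [hv i hi] using hf i (.inr hi)⟩

variable [Fintype ι]

noncomputable def bernoulliWeight (p : ℝ) (f : ι → Bool) : ℝ :=
  ∏ i, if f i then p else 1 - p

lemma bernoulliWeight_nonneg (hp0 : 0 ≤ p) (hp1 : p ≤ 1) (f : ι → Bool) :
    0 ≤ bernoulliWeight p f :=
  prod_nonneg fun i _ => by split <;> linarith

variable [DecidableEq ι]

noncomputable def bernoulliProb (p : ℝ) (A : Set (ι → Bool)) : ℝ :=
  ∑ f, A.indicator (bernoulliWeight p) f

lemma bernoulliProb_nonneg (hp0 : 0 ≤ p) (hp1 : p ≤ 1) (A : Set (ι → Bool)) :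
    0 ≤ bernoulliProb p A :=
  sum_nonneg fun f _ => Set.indicator_nonneg (fun f _ => bernoulliWeight_nonneg hp0 hp1 f) f

lemma bernoulliProb_mono (hp0 : 0 ≤ p) (hp1 : p ≤ 1) {A B : Set (ι → Bool)} (h : A ⊆ B) :
    bernoulliProb p A ≤ bernoulliProb p B :=
  sum_le_sum fun f _ =>
    Set.indicator_le_indicator_of_subset h (bernoulliWeight_nonneg hp0 hp1) f

lemma bernoulliProb_cylinder (p : ℝ) (S : Finset ι) (v : ι → Bool) :
    bernoulliProb p (cylinder S v) = ∏ i ∈ S, if v i then p else 1 - p := by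
  have hsplit : ∀ f : ι → Bool, (cylinder S v).indicator (bernoulliWeight p) f =
      ∏ i, if i ∈ S ∧ f i ≠ v i then 0 else if f i then p else 1 - p := by
    intro f
    by_cases hf : f ∈ cylinder S v
    · rw [Set.indicator_of_mem hf]
      exact prod_congr rfl fun i _ => by simp +contextual [hf i]
    · obtain ⟨i, hiS, hfi⟩ : ∃ i ∈ S, f i ≠ v i := by simpa [cylinder] using hf
      rw [Set.indicator_of_notMem hf, prod_eq_zero (mem_univ i) (by simp [hiS, hfi])]
  have hfactor : ∀ i, (∑ b : Bool, if i ∈ S ∧ b ≠ v i then 0 else if b then p else 1 - p) =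
      if i ∈ S then (if v i then p else 1 - p) else 1 := by
    intro i
    by_cases hi : i ∈ S <;> cases v i <;> simp [hi]
  rw [bernoulliProb, sum_congr rfl fun f _ => hsplit f,
    ← Fintype.prod_sum fun i b => if i ∈ S ∧ b ≠ v i then 0 else if b then p else 1 - p,
    prod_congr rfl fun i _ => hfactor i, prod_ite_mem, univ_inter]

lemma bernoulliProb_le_one (hp0 : 0 ≤ p) (hp1 : p ≤ 1) (A : Set (ι → Bool)) :
    bernoulliProb p A ≤ 1 :=
  calc bernoulliProb p A ≤ bernoulliProb p (cylinder ∅ fun _ => true) :=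
        bernoulliProb_mono hp0 hp1 fun f _ => by simp [cylinder]
    _ = 1 := by rw [bernoulliProb_cylinder, prod_empty]

lemma bernoulliProb_cylinder_inter {S S' : Finset ι} {v v' : ι → Bool}
    (hv : ∀ i ∈ S', v i = false) (hv' : ∀ i ∈ S, v' i = false) :
    (1 - p) ^ #(S ∩ S') * bernoulliProb p (cylinder S v ∩ cylinder S' v') =
      bernoulliProb p (cylinder S v) * bernoulliProb p (cylinder S' v') := by
  set g : ι → ℝ := fun i => if (v i || v' i) then p else 1 - p
  have hS : ∏ i ∈ S, (if v i then p else 1 - p) = ∏ i ∈ S, g i :=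
    prod_congr rfl fun i hi => by simp [g, hv' i hi]
  have hS' : ∏ i ∈ S', (if v' i then p else 1 - p) = ∏ i ∈ S', g i :=
    prod_congr rfl fun i hi => by simp [g, hv i hi]
  have hSS' : (1 - p) ^ #(S ∩ S') = ∏ i ∈ S ∩ S', g i := by
    rw [← prod_const]
    exact prod_congr rfl fun i hi => by simp [g, hv i (mem_inter.1 hi).2, hv' i (mem_inter.1 hi).1]
  rw [cylinder_inter_cylinder hv hv', bernoulliProb_cylinder, bernoulliProb_cylinder,
    bernoulliProb_cylinder, hS, hS', hSS', mul_comm, prod_union_inter]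

lemma pow_mul_pow_le_bernoulliProb_cylinder (hp0 : 0 ≤ p) (hp1 : p ≤ 1) {S : Finset ι}
    {v : ι → Bool} {k m : ℕ} (hk : #{i ∈ S | v i} ≤ k) (hm : #S ≤ m) :
    p ^ k * (1 - p) ^ m ≤ bernoulliProb p (cylinder S v) := by
  rw [bernoulliProb_cylinder, prod_ite, prod_const, prod_const]
  have h1p : 0 ≤ 1 - p := by linarith
  exact mul_le_mul (pow_le_pow_of_le_one hp0 hp1 hk)
    (pow_le_pow_of_le_one h1p (by linarith) ((card_filter_le _ _).trans hm))
    (by positivity) (by positivity)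

end BernoulliProduct

section SecondMoment

variable {Ω I : Type*} [Fintype Ω] [Fintype I]

theorem sq_sum_indicator_le_iUnion_mul (μ : Ω → ℝ) (hμ : ∀ ω, 0 ≤ μ ω) (A : I → Set Ω) :
    (∑ i, ∑ ω, (A i).indicator μ ω) ^ 2 ≤
      (∑ ω, (⋃ i, A i).indicator μ ω) * ∑ i, ∑ j, ∑ ω, (A i ∩ A j).indicator μ ω := by
  classical
  -- `X ω` counts the events containing `ω`; Cauchy–Schwarz is applied to `μ X`, whose square is
  -- at most the product of `(⋃ i, A i).indicator μ` and `μ X ^ 2`.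
  set X : Ω → ℝ := fun ω => ∑ i, (A i).indicator 1 ω
  have hfirst : ∑ i, ∑ ω, (A i).indicator μ ω = ∑ ω, μ ω * X ω := by
    rw [sum_comm]
    refine sum_congr rfl fun ω _ => ?_
    rw [mul_sum]
    exact sum_congr rfl fun i _ => by by_cases hi : ω ∈ A i <;> simp [hi]
  have hsecond : ∑ i, ∑ j, ∑ ω, (A i ∩ A j).indicator μ ω = ∑ ω, μ ω * X ω ^ 2 := by
    rw [sum_congr rfl fun i _ => sum_comm, sum_comm]
    refine sum_congr rfl fun ω _ => ?_
    rw [sq, sum_mul_sum, mul_sum]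
    refine sum_congr rfl fun i _ => ?_
    rw [mul_sum]
    refine sum_congr rfl fun j _ => ?_
    by_cases hi : ω ∈ A i <;> by_cases hj : ω ∈ A j <;> simp [hi, hj]
  rw [hfirst, hsecond]
  refine sum_sq_le_sum_mul_sum_of_sq_le_mul _
    (fun ω _ => Set.indicator_nonneg (fun ω _ => hμ ω) ω)
    (fun ω _ => mul_nonneg (hμ ω) (sq_nonneg _)) fun ω _ => ?_
  by_cases hω : ω ∈ ⋃ i, A i
  · rw [Set.indicator_of_mem hω]
    exact le_of_eq (by ring)
  · have hX : X ω = 0 := sum_eq_zero fun i _ =>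
      Set.indicator_of_notMem (fun h => hω (Set.mem_iUnion.2 ⟨i, h⟩)) _
    simp [hX]

end SecondMoment

section Configurations

variable {V : Type}

abbrev PotentialEdge (V : Type) := {e : Sym2 V // ¬e.IsDiag}

def toGraph (f : PotentialEdge V → Bool) : SimpleGraph V :=
  SimpleGraph.fromEdgeSet (Subtype.val '' {e | f e})

noncomputable def toConfig (G : SimpleGraph V) (e : PotentialEdge V) : Bool :=
  open Classical in decide (e.1 ∈ G.edgeSet)

lemma toConfig_eq_true {G : SimpleGraph V} {e : PotentialEdge V} :
    toConfig G e = true ↔ e.1 ∈ G.edgeSet := by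
  simp [toConfig]

lemma edgeSet_toGraph (f : PotentialEdge V → Bool) :
    (toGraph f).edgeSet = Subtype.val '' {e | f e} := by
  rw [toGraph, SimpleGraph.edgeSet_fromEdgeSet, sdiff_eq_left, Set.disjoint_left]
  rintro _ ⟨e, -, rfl⟩
  exact e.2

lemma mem_edgeSet_toGraph {f : PotentialEdge V → Bool} {e : PotentialEdge V} :
    e.1 ∈ (toGraph f).edgeSet ↔ f e := by
  simp [edgeSet_toGraph, e.2]

noncomputable def graphEquiv : (PotentialEdge V → Bool) ≃ SimpleGraph V where
  toFun := toGraph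
  invFun := toConfig
  left_inv f := by
    funext e
    simp [toConfig, mem_edgeSet_toGraph]
  right_inv G := by
    ext u w
    simp only [toGraph, SimpleGraph.fromEdgeSet_adj, Set.mem_image, Set.mem_ofPred_eq,
      toConfig_eq_true, Subtype.exists, exists_and_right, exists_eq_right]
    exact ⟨fun ⟨⟨_, h⟩, _⟩ => h, fun h => ⟨⟨by simp [G.ne_of_adj h], h⟩, G.ne_of_adj h⟩⟩

lemma card_le_of_forall_exists_eq_mk [DecidableEq V] {s : Finset (PotentialEdge V)}
    {X : Finset (V × V)} (h : ∀ e ∈ s, ∃ xy ∈ X, e.1 = s(xy.1, xy.2)) : #s ≤ #X :=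
  calc #s = #(s.map (Function.Embedding.subtype _)) := (card_map _).symm
    _ ≤ #(X.image fun xy => s(xy.1, xy.2)) := card_le_card fun z hz => by
        obtain ⟨e, he, rfl⟩ := mem_map.1 hz
        obtain ⟨xy, hxy, hexy⟩ := h e he
        exact mem_image.2 ⟨xy, hxy, hexy.symm⟩
    _ ≤ #X := card_image_le

end Configurations

lemma graphWeight_toGraph {n : ℕ} (p : ℝ) (f : PotentialEdge (Fin n) → Bool) :
    graphWeight n p (toGraph f) = bernoulliWeight p f := by
  have hcard : Nat.card (toGraph f).edgeSet = #{e | f e} := by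
    rw [edgeSet_toGraph, Nat.card_image_of_injective Subtype.val_injective,
      Nat.card_eq_fintype_card, Fintype.card_ofFinset]
    rfl
  have htotal : #{e | f e} + #{e | ¬f e} = n.choose 2 := by
    rw [card_filter_add_card_filter_not, card_univ, Sym2.card_subtype_not_diag, Fintype.card_fin]
  rw [graphWeight, bernoulliWeight, prod_ite, prod_const, prod_const, hcard, ← htotal,
    Nat.add_sub_cancel_left]

lemma erProb_eq_bernoulliProb (n : ℕ) (p : ℝ) (A : Set (SimpleGraph (Fin n))) :
    erProb n p A = bernoulliProb p (toGraph ⁻¹' A) := by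
  have hweight : graphWeight n p ∘ graphEquiv = bernoulliWeight p :=
    funext (graphWeight_toGraph p)
  rw [erProb, bernoulliProb, ← graphEquiv.sum_comp]
  simp only [← Set.indicator_comp_right, hweight]
  rfl

section LocalEvents

variable {V : Type} [Fintype V] [DecidableEq V] {H H' : SimpleGraph V} {T T' : Finset V}

def edgesTouching (T : Finset V) : Finset (PotentialEdge V) := {e | ∃ x ∈ T, x ∈ e.1}

def agreeEvent (H : SimpleGraph V) (T : Finset V) : Set (PotentialEdge V → Bool) :=
  cylinder (edgesTouching T) (toConfig H)

lemma card_edgesTouching_le (T : Finset V) : #(edgesTouching T) ≤ #T * Fintype.card V := by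
  rw [← card_univ, ← card_product]
  refine card_le_of_forall_exists_eq_mk fun e he => ?_
  obtain ⟨x, hxT, hxe⟩ := (mem_filter.1 he).2
  exact ⟨(x, Sym2.Mem.other hxe), mem_product.2 ⟨hxT, mem_univ _⟩, (Sym2.other_spec hxe).symm⟩

lemma card_edgesTouching_inter_le (hTT' : Disjoint T T') :
    #(edgesTouching T ∩ edgesTouching T') ≤ #T * #T' := by
  rw [← card_product]
  refine card_le_of_forall_exists_eq_mk fun e he => ?_
  obtain ⟨x, hxT, hxe⟩ := (mem_filter.1 (mem_inter.1 he).1).2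
  obtain ⟨y, hyT', hye⟩ := (mem_filter.1 (mem_inter.1 he).2).2
  have hxy : x ≠ y := fun h => disjoint_left.1 hTT' hxT (h ▸ hyT')
  exact ⟨(x, y), mem_product.2 ⟨hxT, hyT'⟩, (Sym2.mem_and_mem_iff hxy).1 ⟨hxe, hye⟩⟩

lemma toGraph_adj_iff_of_mem_agreeEvent {f : PotentialEdge V → Bool} (hf : f ∈ agreeEvent H T)
    {u : V} (hu : u ∈ T) (w : V) : (toGraph f).Adj u w ↔ H.Adj u w := by
  rcases eq_or_ne u w with rfl | huw
  · simp
  have hdiag : ¬(s(u, w)).IsDiag := by simpa using huw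
  have hval := hf ⟨s(u, w), hdiag⟩ (mem_filter.2 ⟨mem_univ _, u, hu, Sym2.mem_mk_left u w⟩)
  rw [← SimpleGraph.mem_edgeSet, ← SimpleGraph.mem_edgeSet,
    mem_edgeSet_toGraph (e := ⟨s(u, w), hdiag⟩), hval, toConfig_eq_true]

lemma toConfig_eq_false_of_disjoint (hHT : ∀ ⦃u w⦄, H.Adj u w → u ∈ T) (hTT' : Disjoint T T')
    {e : PotentialEdge V} (he : e ∈ edgesTouching T') : toConfig H e = false := by
  obtain ⟨y, hyT', hye⟩ := (mem_filter.1 he).2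
  rw [Bool.eq_false_iff, ne_eq, toConfig_eq_true, ← Sym2.other_spec hye, SimpleGraph.mem_edgeSet]
  exact fun hadj => disjoint_left.1 hTT' (hHT hadj) hyT'

variable {p : ℝ}

lemma bernoulliProb_agreeEvent_inter_le (hp0 : 0 ≤ p) (hp1 : p ≤ 1)
    (hHT : ∀ ⦃u w⦄, H.Adj u w → u ∈ T) (hH'T' : ∀ ⦃u w⦄, H'.Adj u w → u ∈ T')
    (hTT' : Disjoint T T') :
    (1 - p) ^ (#T * #T') * bernoulliProb p (agreeEvent H T ∩ agreeEvent H' T') ≤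
      bernoulliProb p (agreeEvent H T) * bernoulliProb p (agreeEvent H' T') := by
  rw [agreeEvent, agreeEvent, ← bernoulliProb_cylinder_inter
    (fun e he => toConfig_eq_false_of_disjoint hHT hTT' he)
    (fun e he => toConfig_eq_false_of_disjoint hH'T' hTT'.symm he)]
  exact mul_le_mul_of_nonneg_right
    (pow_le_pow_of_le_one (by linarith) (by linarith) (card_edgesTouching_inter_le hTT'))
    (bernoulliProb_nonneg hp0 hp1 _)

end LocalEvents

section Cherries

variable {V : Type} [Fintype V] [DecidableEq V] {p : ℝ}

def cherryEvent (t : Fin 3 ↪ V) : Set (PotentialEdge V → Bool) :=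
  agreeEvent (cherryGraph (t 0) (t 1) (t 2)) {t 0, t 1, t 2}

def swapLeaves (t : Fin 3 ↪ V) : Fin 3 ↪ V :=
  (Equiv.swap 1 2).toEmbedding.trans t

lemma isCherryComponent_of_mem_cherryEvent {t : Fin 3 ↪ V} {f : PotentialEdge V → Bool}
    (hf : f ∈ cherryEvent t) : IsCherryComponent (toGraph f) (t 0) (t 1) (t 2) :=
  fun _ hu w => toGraph_adj_iff_of_mem_agreeEvent hf (by simpa using hu) w

lemma eq_or_eq_swapLeaves {t t' : Fin 3 ↪ V} {f : PotentialEdge V → Bool}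
    (hf : f ∈ cherryEvent t) (hf' : f ∈ cherryEvent t')
    (htt' : ¬Disjoint ({t 0, t 1, t 2} : Finset V) {t' 0, t' 1, t' 2}) :
    t' = t ∨ t' = swapLeaves t := by
  obtain ⟨x, hx, hx'⟩ := not_disjoint_iff.1 htt'
  obtain ⟨h0, h12 | h12⟩ := (isCherryComponent_of_mem_cherryEvent hf).eq_of_mem
    (t.injective.ne (by decide)) (t.injective.ne (by decide))
    (isCherryComponent_of_mem_cherryEvent hf') (t'.injective.ne (by decide))
    (t'.injective.ne (by decide)) (t'.injective.ne (by decide)) (by simpa using hx)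
    (by simpa using hx')
  · left
    ext i
    fin_cases i <;> simp [h0, h12]
  · right
    ext i
    fin_cases i <;> simp [swapLeaves, h0, h12, Equiv.swap_apply_of_ne_of_ne]

lemma pow_mul_pow_le_bernoulliProb_cherryEvent (hp0 : 0 ≤ p) (hp1 : p ≤ 1) (t : Fin 3 ↪ V) :
    p ^ 2 * (1 - p) ^ (3 * Fintype.card V) ≤ bernoulliProb p (cherryEvent t) := by
  refine pow_mul_pow_le_bernoulliProb_cylinder hp0 hp1 ?_
    ((card_edgesTouching_le _).trans (Nat.mul_le_mul_right _ card_le_three))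
  refine (card_le_of_forall_exists_eq_mk (X := {(t 0, t 1), (t 0, t 2)}) fun e he => ?_).trans
    card_le_two
  have he' := toConfig_eq_true.1 (mem_filter.1 he).2
  simp only [cherryGraph, SimpleGraph.edgeSet_fromEdgeSet, Set.mem_sdiff, Set.mem_insert_iff,
    Set.mem_singleton_iff] at he'
  rcases he'.1 with h | h
  · exact ⟨_, mem_insert_self _ _, h⟩
  · exact ⟨_, mem_insert_of_mem (mem_singleton_self _), h⟩

lemma bernoulliProb_cherryEvent_inter_le (hp0 : 0 ≤ p) (hp1 : p ≤ 1) (t t' : Fin 3 ↪ V) :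
    (1 - p) ^ 9 * bernoulliProb p (cherryEvent t ∩ cherryEvent t') ≤
      (if t' ∈ ({t, swapLeaves t} : Finset _) then bernoulliProb p (cherryEvent t) else 0) +
        bernoulliProb p (cherryEvent t) * bernoulliProb p (cherryEvent t') := by
  have h1p : 0 ≤ 1 - p := by linarith
  have hprod := mul_nonneg (bernoulliProb_nonneg hp0 hp1 (cherryEvent t))
    (bernoulliProb_nonneg hp0 hp1 (cherryEvent t'))
  by_cases hd : Disjoint ({t 0, t 1, t 2} : Finset V) {t' 0, t' 1, t' 2}
  · have hmem : ∀ s : Fin 3 ↪ V, ∀ ⦃u w : V⦄, (cherryGraph (s 0) (s 1) (s 2)).Adj u w →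
        u ∈ ({s 0, s 1, s 2} : Finset V) := fun s _ _ h => by
      simpa using mem_of_cherryGraph_adj (s.injective.ne (by decide)) (s.injective.ne (by decide)) h
    have hite : 0 ≤ if t' ∈ ({t, swapLeaves t} : Finset _) then bernoulliProb p (cherryEvent t)
        else 0 := by
      split_ifs
      exacts [bernoulliProb_nonneg hp0 hp1 _, le_rfl]
    calc (1 - p) ^ 9 * bernoulliProb p (cherryEvent t ∩ cherryEvent t')
        ≤ (1 - p) ^ (#{t 0, t 1, t 2} * #{t' 0, t' 1, t' 2}) *
            bernoulliProb p (cherryEvent t ∩ cherryEvent t') :=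
          mul_le_mul_of_nonneg_right (pow_le_pow_of_le_one h1p (by linarith)
            (Nat.mul_le_mul card_le_three card_le_three)) (bernoulliProb_nonneg hp0 hp1 _)
      _ ≤ bernoulliProb p (cherryEvent t) * bernoulliProb p (cherryEvent t') :=
          bernoulliProb_agreeEvent_inter_le hp0 hp1 (hmem t) (hmem t') hd
      _ ≤ _ := le_add_of_nonneg_left hite
  by_cases ht' : t' ∈ ({t, swapLeaves t} : Finset _)
  · rw [if_pos ht']
    calc (1 - p) ^ 9 * bernoulliProb p (cherryEvent t ∩ cherryEvent t')
        ≤ bernoulliProb p (cherryEvent t ∩ cherryEvent t') :=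
          mul_le_of_le_one_left (bernoulliProb_nonneg hp0 hp1 _) (pow_le_one₀ h1p (by linarith))
      _ ≤ bernoulliProb p (cherryEvent t) := bernoulliProb_mono hp0 hp1 Set.inter_subset_left
      _ ≤ _ := le_add_of_nonneg_right hprod
  · have hempty : cherryEvent t ∩ cherryEvent t' = ∅ := by
      refine Set.eq_empty_of_forall_notMem fun f ⟨hf, hf'⟩ => ht' ?_
      rcases eq_or_eq_swapLeaves hf hf' hd with rfl | rfl <;> simp
    simpa [hempty, ht', bernoulliProb] using hprod

variable (V) in
noncomputable def cherryMean (p : ℝ) : ℝ := ∑ t : Fin 3 ↪ V, bernoulliProb p (cherryEvent t)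

lemma sum_sum_bernoulliProb_cherryEvent_inter_le (hp0 : 0 ≤ p) (hp1 : p ≤ 1) :
    (1 - p) ^ 9 * ∑ t : Fin 3 ↪ V, ∑ t' : Fin 3 ↪ V,
        bernoulliProb p (cherryEvent t ∩ cherryEvent t') ≤
      2 * cherryMean V p + cherryMean V p ^ 2 := by
  have hneighbours : ∀ t : Fin 3 ↪ V, ∑ t' : Fin 3 ↪ V,
      (if t' ∈ ({t, swapLeaves t} : Finset _) then bernoulliProb p (cherryEvent t) else 0) ≤
        2 * bernoulliProb p (cherryEvent t) := fun t => by
    rw [sum_ite_mem, univ_inter, sum_const, nsmul_eq_mul]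
    exact mul_le_mul_of_nonneg_right (by exact_mod_cast card_le_two)
      (bernoulliProb_nonneg hp0 hp1 _)
  calc (1 - p) ^ 9 * ∑ t, ∑ t', bernoulliProb p (cherryEvent t ∩ cherryEvent t')
      = ∑ t, ∑ t', (1 - p) ^ 9 * bernoulliProb p (cherryEvent t ∩ cherryEvent t') := by
        rw [mul_sum]
        exact sum_congr rfl fun t _ => mul_sum _ _ _
    _ ≤ ∑ t, ∑ t', ((if t' ∈ ({t, swapLeaves t} : Finset _) then bernoulliProb p (cherryEvent t)
          else 0) + bernoulliProb p (cherryEvent t) * bernoulliProb p (cherryEvent t')) :=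
        sum_le_sum fun t _ => sum_le_sum fun t' _ => bernoulliProb_cherryEvent_inter_le hp0 hp1 t t'
    _ ≤ ∑ t, (2 * bernoulliProb p (cherryEvent t) +
          bernoulliProb p (cherryEvent t) * cherryMean V p) := by
        refine sum_le_sum fun t _ => ?_
        rw [sum_add_distrib, ← mul_sum]
        exact add_le_add_left (hneighbours t) _
    _ = 2 * cherryMean V p + cherryMean V p ^ 2 := by
        rw [sum_add_distrib, ← mul_sum, ← sum_mul, sq]
        rfl

lemma mul_div_le_bernoulliProb_iUnion_cherryEvent (hp0 : 0 ≤ p) (hp1 : p ≤ 1) :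
    (1 - p) ^ 9 * (cherryMean V p / (cherryMean V p + 2)) ≤
      bernoulliProb p (⋃ t : Fin 3 ↪ V, cherryEvent t) := by
  set μ := cherryMean V p
  have hμ : 0 ≤ μ := sum_nonneg fun t _ => bernoulliProb_nonneg hp0 hp1 _
  have hU := bernoulliProb_nonneg hp0 hp1 (⋃ t : Fin 3 ↪ V, cherryEvent t)
  have hsecond : μ ^ 2 ≤ bernoulliProb p (⋃ t : Fin 3 ↪ V, cherryEvent t) *
      ∑ t : Fin 3 ↪ V, ∑ t' : Fin 3 ↪ V, bernoulliProb p (cherryEvent t ∩ cherryEvent t') :=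
    sq_sum_indicator_le_iUnion_mul _ (bernoulliWeight_nonneg hp0 hp1) _
  have hpairs := sum_sum_bernoulliProb_cherryEvent_inter_le (V := V) hp0 hp1
  have h9 : 0 ≤ (1 - p) ^ 9 := pow_nonneg (by linarith) 9
  rcases hμ.eq_or_lt with hμ0 | hμ0
  · rw [← hμ0, zero_div, mul_zero]
    exact hU
  rw [← mul_div_assoc, div_le_iff₀ (by linarith)]
  have : (1 - p) ^ 9 * μ * μ ≤ bernoulliProb p (⋃ t : Fin 3 ↪ V, cherryEvent t) * (μ + 2) * μ := by
    nlinarith [mul_le_mul_of_nonneg_left hsecond h9, mul_le_mul_of_nonneg_left hpairs hU]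
  exact le_of_mul_le_mul_right this hμ0

lemma descFactorial_mul_le_cherryMean (hp0 : 0 ≤ p) (hp1 : p ≤ 1) :
    (Fintype.card V).descFactorial 3 * (p ^ 2 * (1 - p) ^ (3 * Fintype.card V)) ≤
      cherryMean V p := by
  have := sum_le_sum (s := univ) fun (t : Fin 3 ↪ V) _ =>
    pow_mul_pow_le_bernoulliProb_cherryEvent hp0 hp1 t
  rwa [sum_const, card_univ, Fintype.card_embedding_eq, Fintype.card_fin, nsmul_eq_mul] at this

end Cherries

lemma iUnion_cherryEvent_subset {V : Type} [Fintype V] [DecidableEq V] :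
    ⋃ t : Fin 3 ↪ V, cherryEvent t ⊆ toGraph ⁻¹' {G | ∃ C D : Set V,
      IsMinimalVertexCover G C ∧ IsMinimalVertexCover G D ∧ C.ncard ≠ D.ncard} := by
  intro f hf
  obtain ⟨t, hft⟩ := Set.mem_iUnion.1 hf
  exact not_unmixed_iff.1 <| (isCherryComponent_of_mem_cherryEvent hft).not_unmixed
    (t.injective.ne (by decide)) (t.injective.ne (by decide)) (t.injective.ne (by decide))

section Asymptotics

lemma tendsto_div_add_two_atTop : Tendsto (fun x : ℝ => x / (x + 2)) atTop (nhds 1) := by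
  have h : Tendsto (fun x : ℝ => 1 - 2 / (x + 2)) atTop (nhds (1 - 0)) :=
    tendsto_const_nhds.sub <| tendsto_const_nhds.div_atTop <|
      tendsto_atTop_add_const_right _ 2 tendsto_id
  refine (sub_zero (1 : ℝ) ▸ h).congr' ?_
  filter_upwards [eventually_ge_atTop 0] with x hx
  field_simp
  ring

lemma cube_div_four_le_descFactorial_three {n : ℕ} (hn : 4 ≤ n) :
    (n : ℝ) ^ 3 / 4 ≤ n.descFactorial 3 := by
  have hcast : (n.descFactorial 3 : ℝ) = n * (n - 1) * (n - 2) := by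
    simp [Nat.descFactorial_succ, Nat.cast_sub (by omega : 2 ≤ n), Nat.cast_sub (by omega : 1 ≤ n)]
    ring
  have hn' : (4 : ℝ) ≤ n := by exact_mod_cast hn
  rw [hcast]
  nlinarith [sq_nonneg ((n : ℝ) - 4)]

lemma tendsto_cherryMean {α : ℝ} (h1 : 1 ≤ α) (h2 : α < 3 / 2) :
    Tendsto (fun n : ℕ => cherryMean (Fin n) ((n : ℝ) ^ (-α))) atTop atTop := by
  have hgrowth : Tendsto (fun n : ℕ => (n : ℝ) ^ (3 - 2 * α) / 4) atTop atTop :=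
    ((tendsto_rpow_atTop (by linarith)).comp tendsto_natCast_atTop_atTop).atTop_div_const
      (by norm_num)
  have hexp :
      Tendsto (fun n : ℕ => ((1 + (-1) / n : ℝ) ^ n) ^ 3) atTop (nhds (Real.exp (-1) ^ 3)) :=
    (Real.tendsto_one_add_div_pow_exp (-1)).pow 3
  refine tendsto_atTop_mono' atTop ?_ (hgrowth.atTop_mul_pos (by positivity) hexp)
  filter_upwards [eventually_ge_atTop 4] with n hn
  have hn' : (4 : ℝ) ≤ n := by exact_mod_cast hn
  have hn0 : (0 : ℝ) < n := by linarith
  set p : ℝ := (n : ℝ) ^ (-α)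
  have hp0 : 0 < p := Real.rpow_pos_of_pos hn0 _
  have hp : p ≤ 1 / n := by
    rw [one_div, ← Real.rpow_neg_one]
    exact Real.rpow_le_rpow_of_exponent_le (by linarith) (by linarith)
  have hp1 : p ≤ 1 := hp.trans (by rw [div_le_one hn0]; linarith)
  have hrpow : (n : ℝ) ^ (3 - 2 * α) = n ^ 3 * p ^ 2 := by
    rw [show 3 - 2 * α = ((3 : ℕ) : ℝ) + -α * ((2 : ℕ) : ℝ) by push_cast; ring,
      Real.rpow_add hn0, Real.rpow_mul hn0.le, Real.rpow_natCast, Real.rpow_natCast]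
  have hbase : 0 ≤ 1 + (-1) / (n : ℝ) := by
    rw [neg_div, ← sub_eq_add_neg, sub_nonneg, div_le_one hn0]
    linarith
  have hsurvive : ((1 + (-1) / n : ℝ) ^ n) ^ 3 ≤ (1 - p) ^ (3 * n) := by
    rw [← pow_mul, mul_comm n 3]
    exact pow_le_pow_left₀ hbase (by linarith [show (-1) / (n : ℝ) = -(1 / n) by ring]) _
  have hmean := descFactorial_mul_le_cherryMean (V := Fin n) hp0.le hp1
  rw [Fintype.card_fin] at hmean
  calc (n : ℝ) ^ (3 - 2 * α) / 4 * ((1 + (-1) / n : ℝ) ^ n) ^ 3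
      = (n : ℝ) ^ 3 / 4 * (p ^ 2 * ((1 + (-1) / n : ℝ) ^ n) ^ 3) := by rw [hrpow]; ring
    _ ≤ n.descFactorial 3 * (p ^ 2 * (1 - p) ^ (3 * n)) :=
        mul_le_mul (cube_div_four_le_descFactorial_three hn)
          (mul_le_mul_of_nonneg_left hsurvive (by positivity)) (by positivity) (by positivity)
    _ ≤ _ := hmean

end Asymptotics

end RandomGraph

open RandomGraph

/-- For `p = n^{-α}` with `α ∈ [1, 3/2)`, with high probability `G(n,p)` has two
minimal vertex covers of different cardinalities, i.e. the random edge ideal `I(n,p)`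
is not unmixed. -/
theorem not_unmixed_whp_sparse (α : ℝ) (h1 : 1 ≤ α) (h2 : α < 3 / 2) :
    Tendsto (fun n : ℕ => erProb n ((n : ℝ) ^ (-α))
        {G | ∃ C D : Set (Fin n), IsMinimalVertexCover G C ∧ IsMinimalVertexCover G D ∧
          C.ncard ≠ D.ncard})
      atTop (nhds 1) := by
  have hp : ∀ᶠ n : ℕ in atTop, 0 ≤ (n : ℝ) ^ (-α) ∧ (n : ℝ) ^ (-α) ≤ 1 := by
    filter_upwards [eventually_ge_atTop 1] with n hn
    have hn' : (1 : ℝ) ≤ n := by exact_mod_cast hn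
    exact ⟨by positivity, Real.rpow_le_one_of_one_le_of_nonpos hn' (by linarith)⟩
  have hsurvive : Tendsto (fun n : ℕ => (1 - (n : ℝ) ^ (-α)) ^ 9) atTop (nhds 1) := by
    simpa using ((tendsto_const_nhds (x := (1 : ℝ))).sub
      ((tendsto_rpow_neg_atTop (by linarith)).comp tendsto_natCast_atTop_atTop)).pow 9
  have hlower := hsurvive.mul (tendsto_div_add_two_atTop.comp (tendsto_cherryMean h1 h2))
  rw [mul_one] at hlower
  refine tendsto_of_tendsto_of_tendsto_of_le_of_le' hlower tendsto_const_nhds ?_ ?_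
  · filter_upwards [hp] with n ⟨hp0, hp1⟩
    rw [erProb_eq_bernoulliProb]
    exact (mul_div_le_bernoulliProb_iUnion_cherryEvent hp0 hp1).trans
      (bernoulliProb_mono hp0 hp1 iUnion_cherryEvent_subset)
  · filter_upwards [hp] with n ⟨hp0, hp1⟩
    rw [erProb_eq_bernoulliProb]
    exact bernoulliProb_le_one hp0 hp1 _
end
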